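/- Let G be a discrete countable group, Y ⊆ G an infinite subset such that the pair (G,Y) has relative Property T, and let S be a finite generating subset of G. Then there exists a constant C > 0 such that for every affine isometric action (H, π, b) of G on a Hilbert space, one has ‖b(y)‖² ≤ C · Σ_{s∈S} ‖b(s)‖² for all y ∈ Y. -/

import Mathlib

open MeasureTheory Filter Set

noncomputable section

/-- The word distance on a group `G` with respect to a (symmetrized) generating set `S`. -/
def wordDist {G : Type*} [Group G] (S : Set G) (x y : G) : ℕ :=
  sInf {n : ℕ | ∃ l : List G, l.length = n ∧ (∀ a ∈ l, a ∈ S ∨ a⁻¹ ∈ S) ∧ x⁻¹ * y = l.prod}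

/-- A function `[0,∞) → [0,∞)` is proper if it tends to `∞` at `∞`. -/
def ProperFun (ρ : ℝ → ℝ) : Prop := Tendsto ρ atTop atTop

/-- A coarse embedding of a sequence of spaces (given by distance functions `d n`) into a
space `Y` with distance function `dY`. -/
def IsCoarseEmbeddingSeq {X : ℕ → Type*} (d : ∀ n, X n → X n → ℝ)
    {Y : Type*} (dY : Y → Y → ℝ) (φ : ∀ n, X n → Y) : Prop :=
  ∃ ρ γ : ℝ → ℝ, ProperFun ρ ∧ ProperFun γ ∧
    ∀ n x y, ρ (d n x y) ≤ dY (φ n x) (φ n y) ∧ dY (φ n x) (φ n y) ≤ γ (d n x y)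

/-- An affine isometric action of a group `G` on a (real) Hilbert space, given by an
orthogonal representation `π` together with a `1`-cocycle `b`. -/
structure AffIsomAction (G : Type) [Group G] where
  (H : Type)
  [normed : NormedAddCommGroup H]
  [ips : InnerProductSpace ℝ H]
  [complete : CompleteSpace H]
  (π : G →* (H ≃ₗᵢ[ℝ] H))
  (b : G → H)
  (cocycle : ∀ g h : G, b (g * h) = π g (b h) + b g)

attribute [instance] AffIsomAction.normed AffIsomAction.ips AffIsomAction.complete

/-- The pair `(G, Y)` has relative Property (T): for every affine isometric action of `G`
on a Hilbert space, the orbits of `Y` are bounded. -/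
def RelPropT (G : Type) [Group G] (Y : Set G) : Prop :=
  ∀ A : AffIsomAction G, ∀ v : A.H, ∃ M : ℝ, ∀ y ∈ Y, ‖A.π y v + A.b y‖ ≤ M

/-- `G`, finitely generated by `S`, has the Haagerup property: it admits an affine isometric
action on a Hilbert space whose cocycle is a coarse embedding for the word metric of `S`. -/
def HasHaagerup (G : Type) [Group G] (S : Set G) : Prop :=
  ∃ A : AffIsomAction G, ∃ ρ γ : ℝ → ℝ, ProperFun ρ ∧ ProperFun γ ∧
    ∀ x y : G, ρ (wordDist S x y) ≤ ‖A.b x - A.b y‖ ∧ ‖A.b x - A.b y‖ ≤ γ (wordDist S x y)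

/-- The diameter of a subset `A` of a graph `X` for the graph metric. -/
def setGraphDiam {V : Type*} (X : SimpleGraph V) (A : Set V) : ℕ :=
  sSup {k | ∃ x ∈ A, ∃ y ∈ A, X.dist x y = k}

/-- A sequence of finite connected graphs of uniformly bounded degree, of cardinalities tending to
infinity, and with Cheeger constants uniformly bounded below, i.e. an expander. -/
structure IsExpanderSeq {V : ℕ → Type*} (X : ∀ n, SimpleGraph (V n)) : Prop where
  (finite : ∀ n, Finite (V n))
  (connected : ∀ n, (X n).Connected)
  (degBound : ∃ d : ℕ, ∀ n v, ((X n).neighborSet v).ncard ≤ d)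
  (cardTop : Tendsto (fun n => Nat.card (V n)) atTop atTop)
  (cheeger : ∃ c : ℝ, 0 < c ∧ ∀ n (A : Set (V n)), A.Nonempty →
      2 * A.ncard ≤ Nat.card (V n) →
      c * A.ncard ≤ ({e : V n × V n | e.1 ∈ A ∧ e.2 ∉ A ∧ (X n).Adj e.1 e.2}).ncard)

/-- A weak embedding of a sequence of finite graphs into a sequence of spaces with distance
functions `dY n`: the maps are uniformly Lipschitz and fibers of balls are asymptotically
negligible. -/
def IsWeakEmbedding {V : ℕ → Type*} (X : ∀ n, SimpleGraph (V n)) {Y : ℕ → Type*}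
    (dY : ∀ n, Y n → Y n → ℝ) (φ : ∀ n, V n → Y n) : Prop :=
  (∃ K : ℝ, 0 < K ∧ ∀ n x y, dY n (φ n x) (φ n y) ≤ K * (X n).dist x y) ∧
  ∀ R > (0:ℝ), ∀ ε > (0:ℝ), ∃ N : ℕ, ∀ n ≥ N, ∀ x : V n,
    (({x' : V n | dY n (φ n x') (φ n x) ≤ R}).ncard : ℝ) ≤ ε * Nat.card (V n)

end

noncomputable section

/-!
If no uniform bound existed, there would be actions `Aₙ` with `‖bₙ(s)‖ ≤ 1` on `S` and points
`yₙ ∈ Y` with `‖bₙ(yₙ)‖ > 2ⁿ(n+1)`. Rescaling `bₙ` by `2⁻ⁿ` makes the cocycles square-summable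
on `S`, hence, by the cocycle identity, on all of `G`, so the `ℓ²`-direct sum of the rescaled
actions exists; relative Property (T) bounds its cocycle on `Y`, while its `n`-th coordinate at
`yₙ` exceeds `n + 1`. Rescaling an arbitrary action by `(∑ₛ ‖b(s)‖²)^(-1/2)` turns the bound on
actions normalized on `S` into the quadratic one.
-/

section lpCongr

variable {ι 𝕜 : Type*} [NormedField 𝕜] {E F : ι → Type*} [∀ i, NormedAddCommGroup (E i)]
  [∀ i, NormedSpace 𝕜 (E i)] [∀ i, NormedAddCommGroup (F i)] [∀ i, NormedSpace 𝕜 (F i)]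
  (p : ENNReal) [Fact (1 ≤ p)]

def LinearIsometryEquiv.lpCongrRight (e : ∀ i, E i ≃ₗᵢ[𝕜] F i) : lp E p ≃ₗᵢ[𝕜] lp F p where
  toFun f := ⟨fun i => e i (f i), (lp.memℓp f).mono' fun i => ((e i).norm_map (f i)).le⟩
  invFun f :=
    ⟨fun i => (e i).symm (f i), (lp.memℓp f).mono' fun i => ((e i).symm.norm_map (f i)).le⟩
  left_inv f := by ext i; simp
  right_inv f := by ext i; simp
  map_add' f g := by ext i; exact map_add (e i) (f i) (g i)
  map_smul' c f := by ext i; simp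
  norm_map' f :=
    have hp : p ≠ 0 := (zero_lt_one.trans_le Fact.out).ne'
    le_antisymm (lp.norm_mono hp fun i => ((e i).norm_map (f i)).le)
      (lp.norm_mono hp fun i => ((e i).norm_map (f i)).ge)

@[simp] theorem LinearIsometryEquiv.lpCongrRight_apply (e : ∀ i, E i ≃ₗᵢ[𝕜] F i)
    (f : lp E p) (i : ι) : LinearIsometryEquiv.lpCongrRight p e f i = e i (f i) := rfl

end lpCongr

namespace AffIsomAction

variable {G : Type} [Group G]

theorem b_one (A : AffIsomAction G) : A.b 1 = 0 := by
  simpa using A.cocycle 1 1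

theorem b_inv (A : AffIsomAction G) (g : G) : A.b g⁻¹ = -A.π g⁻¹ (A.b g) := by
  have h := A.cocycle g⁻¹ g
  rw [inv_mul_cancel, A.b_one] at h
  exact eq_neg_of_add_eq_zero_right h.symm

theorem norm_b_inv (A : AffIsomAction G) (g : G) : ‖A.b g⁻¹‖ = ‖A.b g‖ := by
  rw [A.b_inv, norm_neg, LinearIsometryEquiv.norm_map]

theorem b_eq_zero_of_closure_eq_top (A : AffIsomAction G) {S : Set G}
    (hS : Subgroup.closure S = ⊤) (h : ∀ s ∈ S, A.b s = 0) (g : G) : A.b g = 0 := by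
  induction hS ▸ Subgroup.mem_top g using Subgroup.closure_induction with
  | mem x hx => exact h x hx
  | one => exact A.b_one
  | mul x y _ _ hx hy => rw [A.cocycle, hx, hy, map_zero, add_zero]
  | inv x _ hx => rw [A.b_inv, hx, map_zero, neg_zero]

instance : SMul ℝ (AffIsomAction G) where
  smul t A :=
    { A with
      b := fun g => t • A.b g
      cocycle := fun g h => by
        simp only [A.cocycle, smul_add, LinearIsometryEquiv.map_smul] }

@[simp] theorem smul_b (t : ℝ) (A : AffIsomAction G) (g : G) : (t • A).b g = t • A.b g := rfl

variable {ι : Type}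

theorem memℓp_b_of_closure_eq_top (B : ι → AffIsomAction G) {S : Set G}
    (hS : Subgroup.closure S = ⊤) (h : ∀ s ∈ S, Memℓp (fun i => (B i).b s) 2) (g : G) :
    Memℓp (fun i => (B i).b g) 2 := by
  induction hS ▸ Subgroup.mem_top g using Subgroup.closure_induction with
  | mem x hx => exact h x hx
  | one => simpa only [b_one] using zero_mem_ℓp'
  | mul x y _ _ hx hy =>
    simp only [cocycle]
    exact (hy.mono' fun i => ((B i).π x).norm_map _ |>.le).add hx
  | inv x _ hx => exact hx.mono' fun i => ((B i).norm_b_inv x).le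

def lpSum (B : ι → AffIsomAction G) (hB : ∀ g, Memℓp (fun i => (B i).b g) 2) :
    AffIsomAction G where
  H := lp (fun i => (B i).H) 2
  π :=
    { toFun g := LinearIsometryEquiv.lpCongrRight 2 fun i => (B i).π g
      map_one' := by ext f i; simp
      map_mul' g h := by ext f i; simp }
  b g := ⟨fun i => (B i).b g, hB g⟩
  cocycle g h := by ext i; exact (B i).cocycle g h

theorem norm_b_le_norm_lpSum_b (B : ι → AffIsomAction G) (hB : ∀ g, Memℓp (fun i => (B i).b g) 2)
    (g : G) (i : ι) : ‖(B i).b g‖ ≤ ‖(lpSum B hB).b g‖ :=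
  lp.norm_apply_le_norm two_ne_zero ((lpSum B hB).b g) i

theorem sq_norm_b_le_of_forall_norm_b_le {S : Finset G} (hS : Subgroup.closure (S : Set G) = ⊤)
    {M : ℝ} {g : G} (hM : ∀ A : AffIsomAction G, (∀ s ∈ S, ‖A.b s‖ ≤ 1) → ‖A.b g‖ ≤ M)
    (A : AffIsomAction G) : ‖A.b g‖ ^ 2 ≤ M ^ 2 * ∑ s ∈ S, ‖A.b s‖ ^ 2 := by
  rcases (Finset.sum_nonneg fun s _ => sq_nonneg ‖A.b s‖).eq_or_lt with hσ | hσ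
  · have hb : ∀ s ∈ (S : Set G), A.b s = 0 := fun s hs => by
      simpa using (Finset.sum_eq_zero_iff_of_nonneg fun s _ => sq_nonneg ‖A.b s‖).1 hσ.symm s hs
    simp [A.b_eq_zero_of_closure_eq_top hS hb g, ← hσ]
  · set r := √(∑ s ∈ S, ‖A.b s‖ ^ 2)
    have hr : 0 < r := Real.sqrt_pos.2 hσ
    have hb : ∀ s ∈ S, ‖A.b s‖ ≤ r := fun s hs =>
      Real.le_sqrt_of_sq_le (Finset.single_le_sum (fun s _ => sq_nonneg ‖A.b s‖) hs)
    have hg : r⁻¹ * ‖A.b g‖ ≤ M := by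
      simpa [norm_smul, abs_of_pos hr] using
        hM (r⁻¹ • A) fun s hs => by
          simpa [norm_smul, abs_of_pos hr, inv_mul_le_one₀ hr] using hb s hs
    calc ‖A.b g‖ ^ 2 ≤ (M * r) ^ 2 := by
          gcongr
          rwa [mul_comm, ← inv_mul_le_iff₀ hr]
      _ = M ^ 2 * ∑ s ∈ S, ‖A.b s‖ ^ 2 := by rw [mul_pow, Real.sq_sqrt hσ.le]

end AffIsomAction

namespace RelPropT

variable {G : Type} [Group G] {Y : Set G}

theorem exists_forall_norm_b_le (hT : RelPropT G Y) (A : AffIsomAction G) :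
    ∃ M, ∀ y ∈ Y, ‖A.b y‖ ≤ M := by
  simpa using hT A 0

theorem exists_forall_norm_b_le_of_closure_eq_top (hT : RelPropT G Y) {S : Set G}
    (hS : Subgroup.closure S = ⊤) :
    ∃ M, ∀ A : AffIsomAction G, (∀ s ∈ S, ‖A.b s‖ ≤ 1) → ∀ y ∈ Y, ‖A.b y‖ ≤ M := by
  by_contra! h
  choose A hA y hy hlt using fun n : ℕ => h (2 ^ n * (n + 1))
  set B : ℕ → AffIsomAction G := fun n => ((2 : ℝ) ^ n)⁻¹ • A n
  have hgeom : Memℓp (fun n : ℕ => ((2 : ℝ) ^ n)⁻¹) 2 :=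
    (memℓp_gen (by simpa using summable_geometric_two)).of_exponent_ge one_le_two
  have hB : ∀ g, Memℓp (fun n => (B n).b g) 2 :=
    AffIsomAction.memℓp_b_of_closure_eq_top B hS fun s hs =>
      hgeom.mono fun n => by simpa [B, norm_smul] using hA n s hs
  obtain ⟨M, hM⟩ := hT.exists_forall_norm_b_le (AffIsomAction.lpSum B hB)
  set n := ⌈M⌉₊
  have hlarge : (n : ℝ) + 1 < ‖(B n).b (y n)‖ := by
    simpa [B, norm_smul, ← div_eq_inv_mul, lt_div_iff₀, mul_comm] using hlt n
  linarith [AffIsomAction.norm_b_le_norm_lpSum_b B hB (y n) n, hM _ (hy n), Nat.le_ceil M]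

end RelPropT

theorem cocycle_bound_of_relPropT_general
    (G : Type) [Group G]
    (Y : Set G) (hT : RelPropT G Y)
    (S : Finset G) (hS : Subgroup.closure (S : Set G) = ⊤) :
    ∃ C : ℝ, 0 < C ∧ ∀ A : AffIsomAction G, ∀ y ∈ Y,
      ‖A.b y‖ ^ 2 ≤ C * ∑ s ∈ S, ‖A.b s‖ ^ 2 := by
  obtain ⟨M, hM⟩ := hT.exists_forall_norm_b_le_of_closure_eq_top hS
  refine ⟨M ^ 2 + 1, by positivity, fun A y hy => ?_⟩
  calc ‖A.b y‖ ^ 2 ≤ M ^ 2 * ∑ s ∈ S, ‖A.b s‖ ^ 2 :=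
        AffIsomAction.sq_norm_b_le_of_forall_norm_b_le hS (fun A' hA' => hM A' hA' y hy) A
    _ ≤ (M ^ 2 + 1) * ∑ s ∈ S, ‖A.b s‖ ^ 2 := by gcongr; linarith

/-- If `(G,Y)` has relative Property (T) for an infinite subset `Y` of the
discrete countable group `G`, and `S` is a finite generating set of `G`, then there is `C > 0`
such that every affine isometric action `(H,π,b)` of `G` on a Hilbert space satisfies
`‖b(y)‖² ≤ C ∑_{s ∈ S} ‖b(s)‖²` for all `y ∈ Y`. -/
theorem cocycle_bound_of_relPropT
    (G : Type) [Group G] [Countable G]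
    (Y : Set G) (hY : Y.Infinite) (hT : RelPropT G Y)
    (S : Finset G) (hS : Subgroup.closure (S : Set G) = ⊤) :
    ∃ C : ℝ, 0 < C ∧ ∀ A : AffIsomAction G, ∀ y ∈ Y,
      ‖A.b y‖ ^ 2 ≤ C * ∑ s ∈ S, ‖A.b s‖ ^ 2 :=
  cocycle_bound_of_relPropT_general G Y hT S hS

end
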